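/- arXiv:2204.05540 — 5 statements merged into one kernel-verified Lean document; each statement's English description precedes it below -/
import Mathlib

section
/- The characteristic polynomial of the (n+1)×(n+1) tridiagonal matrix K_q(n) equals ∏_{k=0}^{n} (x − ((n−k)_q − (k)_q)); equivalently, the eigenvalues of K_q(n) are (n−k)_q − (k)_q for k = 0, 1, …, n. -/
/-- The real q-integer `(m)_q = 1 + q + ⋯ + q^(m-1)`, with `(0)_q = 0`. -/
noncomputable def qIntR (q : ℝ) (m : ℕ) : ℝ := ∑ i ∈ Finset.range m, q ^ i

/-- The q-analog of the Kac matrix: the `(n+1) × (n+1)` tridiagonal matrix with zero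
diagonal, subdiagonal entries `(k+1)_q` (at position `(k+1, k)`) and superdiagonal
entries `q^(k-1) (n-k+1)_q` (at position `(k-1, k)`). -/
noncomputable def Kq (q : ℝ) (n : ℕ) : Matrix (Fin (n + 1)) (Fin (n + 1)) ℝ :=
  fun i j =>
    if (i : ℕ) = (j : ℕ) + 1 then qIntR q ((j : ℕ) + 1)
    else if (i : ℕ) + 1 = (j : ℕ) then q ^ (i : ℕ) * qIntR q (n + 1 - (j : ℕ))
    else 0

open Polynomial Finset Matrix

-- step 1: coeff of comp (C q * X)
lemma coeff_comp_CqX (p : ℝ[X]) (q : ℝ) (i : ℕ) :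
    (p.comp (C q * X)).coeff i = q ^ i * p.coeff i := by
  induction p using Polynomial.induction_on' with
  | add p r hp hr => simp [add_comp, hp, hr, mul_add]
  | monomial m a =>
    rw [monomial_comp, mul_pow, ← C_pow, show C a * (C (q^m) * X^m) = C (a * q^m) * X^m by rw [C_mul]; ring,
      coeff_C_mul, coeff_X_pow, coeff_monomial]
    split_ifs with h h'
    · subst h; ring
    · omega
    · omega
    · ring

-- step 2: shift lemma
lemma shift_prod (q c : ℝ) (m : ℕ) :
    (1 + C c * X) * (∏ j ∈ range m, (1 + C (c * q ^ j) * X)).comp (C q * X)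
      = (1 + C (c * q ^ m) * X) * ∏ j ∈ range m, (1 + C (c * q ^ j) * X) := by
  rw [Polynomial.prod_comp]
  have h1 : ∀ j : ℕ, ((1 : ℝ[X]) + C (c * q ^ j) * X).comp (C q * X)
      = 1 + C (c * q ^ (j + 1)) * X := by
    intro j
    simp [add_comp, mul_comp, pow_succ]
    ring
  simp_rw [h1]
  have h2 := Finset.prod_range_succ' (fun j => (1 : ℝ[X]) + C (c * q ^ j) * X) m
  have h3 := Finset.prod_range_succ (fun j => (1 : ℝ[X]) + C (c * q ^ j) * X) m
  simp only [pow_zero, mul_one] at h2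
  rw [mul_comm] at h2
  rw [← h2, h3, mul_comm]

noncomputable def gpoly (q : ℝ) (n k : ℕ) : ℝ[X] :=
  (∏ j ∈ range (n - k), (1 + C (1 * q ^ j) * X)) * ∏ j ∈ range k, (1 + C ((-1) * q ^ j) * X)

lemma gpoly_funEq (q : ℝ) (n k : ℕ) (hk : k ≤ n) :
    (gpoly q n k).comp (C q * X) * (1 - X ^ 2)
      = gpoly q n k * (1 + C (q ^ (n - k) - q ^ k) * X - C (q ^ n) * X ^ 2) := by
  have e1 : ((1 : ℝ[X]) - X ^ 2) = (1 + C (1 : ℝ) * X) * (1 + C (-1 : ℝ) * X) := by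
    simp only [_root_.map_one, _root_.map_neg]
    ring
  unfold gpoly
  rw [mul_comp, e1]
  have hA := shift_prod q 1 (n - k)
  have hB := shift_prod q (-1) k
  have e2 : ((1:ℝ[X]) + C (1 * q ^ (n - k)) * X) * (1 + C ((-1) * q ^ k) * X)
      = 1 + C (q ^ (n - k) - q ^ k) * X - C (q ^ n) * X ^ 2 := by
    have h : (C (q ^ (n - k)) * C (q ^ k) : ℝ[X]) = C (q ^ n) := by
      rw [← C_mul, ← pow_add]
      congr 2
      omega
    simp only [one_mul, _root_.map_neg, _root_.map_sub, _root_.map_mul, _root_.map_one]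
    linear_combination (-X^2 : ℝ[X]) * h
  linear_combination ((∏ j ∈ range (n - k), ((1:ℝ[X]) + C (1 * q ^ j) * X)) * ∏ j ∈ range k, ((1:ℝ[X]) + C ((-1) * q ^ j) * X)) * e2 + ((1 + C (-1:ℝ) * X) * (∏ j ∈ range k, ((1:ℝ[X]) + C ((-1) * q ^ j) * X)).comp (C q * X)) * hA
    + ((1 + C ((1:ℝ) * q ^ (n - k)) * X) * ∏ j ∈ range (n - k), ((1:ℝ[X]) + C (1 * q ^ j) * X)) * hB

lemma gpoly_natDegree_le (q : ℝ) (n k : ℕ) (hk : k ≤ n) : (gpoly q n k).natDegree ≤ n := by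
  have h1 : ∀ (c : ℝ) (m : ℕ), ((∏ j ∈ range m, ((1:ℝ[X]) + C (c * q ^ j) * X)).natDegree) ≤ m := by
    intro c m
    refine le_trans (Polynomial.natDegree_prod_le _ _) ?_
    refine le_trans (Finset.sum_le_card_nsmul _ _ 1 ?_) (by simp)
    intro j _
    have : ((1:ℝ[X]) + C (c * q ^ j) * X) = C (c * q ^ j) * X + C 1 := by simp [add_comm]
    rw [this]
    exact Polynomial.natDegree_linear_le
  calc (gpoly q n k).natDegree ≤ _ + _ := Polynomial.natDegree_mul_le
    _ ≤ (n - k) + k := add_le_add (h1 1 (n-k)) (h1 (-1) k)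
    _ = n := by omega

lemma gpoly_coeff_zero (q : ℝ) (n k : ℕ) : (gpoly q n k).coeff 0 = 1 := by
  have h1 : ∀ (c : ℝ) (m : ℕ), ((∏ j ∈ range m, ((1:ℝ[X]) + C (c * q ^ j) * X)).coeff 0) = 1 := by
    intro c m
    rw [Polynomial.coeff_zero_eq_eval_zero, Polynomial.eval_prod]
    simp
  rw [gpoly, Polynomial.mul_coeff_zero, h1, h1, mul_one]

lemma qIntR_mul (q : ℝ) (m : ℕ) : (q - 1) * qIntR q m = q ^ m - 1 := by
  rw [qIntR, mul_comm]
  exact geom_sum_mul q m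

lemma gpoly_row (q : ℝ) (hq : 2 ≤ q) (n k j : ℕ) (hk : k ≤ n) (hj : j ≤ n) :
    qIntR q (j + 1) * (gpoly q n k).coeff (j + 1)
      + (if 1 ≤ j then q ^ (j - 1) * qIntR q (n + 1 - j) * (gpoly q n k).coeff (j - 1) else 0)
    = (qIntR q (n - k) - qIntR q k) * (gpoly q n k).coeff j := by
  have hq1 : (q - 1) ≠ 0 := by nlinarith
  set g := gpoly q n k with hg
  have heq : g.comp (C q * X) - g.comp (C q * X) * X ^ 2
      = g + C (q ^ (n - k) - q ^ k) * (g * X) - C (q ^ n) * (g * X ^ 2) := by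
    linear_combination gpoly_funEq q n k hk
  have hco := congrArg (fun p => Polynomial.coeff p (j + 1)) heq
  simp only [coeff_sub, coeff_add, coeff_C_mul, coeff_mul_X_pow', coeff_mul_X,
    coeff_comp_CqX] at hco
  apply mul_left_cancel₀ hq1
  have hA := qIntR_mul q (j + 1)
  have hC := qIntR_mul q (n - k)
  have hD := qIntR_mul q k
  rcases j with _ | j'
  · simp only [if_neg (by omega : ¬ (2:ℕ) ≤ 0 + 1)] at hco
    rw [if_neg (by omega : ¬ (1:ℕ) ≤ 0)]
    linear_combination g.coeff 1 * hA - g.coeff 0 * hC + g.coeff 0 * hD + hco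
  · have h1 : (1 ≤ j' + 1) := by omega
    have h2 : (2 ≤ j' + 1 + 1) := by omega
    simp only [if_pos h1, if_pos h2, Nat.add_sub_cancel] at hco ⊢
    have h3 : j' + 1 + 1 - 2 = j' := by omega
    have h4 : n + 1 - (j' + 1) = n - j' := by omega
    rw [h3] at hco
    rw [h4]
    have hB := qIntR_mul q (n - j')
    have hpow : q ^ j' * q ^ (n - j') = q ^ n := by
      rw [← pow_add]; congr 1; omega
    linear_combination g.coeff (j' + 2) * hA + q ^ j' * g.coeff j' * hB
      - g.coeff (j' + 1) * hC + g.coeff (j' + 1) * hD + hco + g.coeff j' * hpow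


lemma gpoly_eigen (q : ℝ) (hq : 2 ≤ q) (n k : ℕ) (hk : k ≤ n) (i : Fin (n + 1)) :
    ∑ j : Fin (n + 1), Kq q n j i * (gpoly q n k).coeff (j : ℕ)
      = (qIntR q (n - k) - qIntR q k) * (gpoly q n k).coeff (i : ℕ) := by
  set u : ℕ → ℝ := fun m => (gpoly q n k).coeff m with hu
  set i0 := (i : ℕ) with hi0
  have hi : i0 ≤ n := Nat.lt_succ_iff.mp i.isLt
  have hsum : (∑ j : Fin (n + 1), Kq q n j i * u (j : ℕ))
      = ∑ j ∈ range (n + 1),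
        ((if j = i0 + 1 then qIntR q (i0 + 1)
          else if j + 1 = i0 then q ^ j * qIntR q (n + 1 - i0) else 0) * u j) := by
    rw [← Fin.sum_univ_eq_sum_range (fun j =>
      (if j = i0 + 1 then qIntR q (i0 + 1)
        else if j + 1 = i0 then q ^ j * qIntR q (n + 1 - i0) else 0) * u j) (n + 1)]
    rfl
  rw [hsum]
  have hsplit : ∀ j : ℕ,
      ((if j = i0 + 1 then qIntR q (i0 + 1)
        else if j + 1 = i0 then q ^ j * qIntR q (n + 1 - i0) else 0) * u j)
      = (if j = i0 + 1 then qIntR q (i0 + 1) * u j else 0)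
        + (if j + 1 = i0 then q ^ j * qIntR q (n + 1 - i0) * u j else 0) := by
    intro j
    by_cases h1 : j = i0 + 1
    · rw [if_pos h1, if_pos h1, if_neg (by omega), add_zero]
    · rw [if_neg h1, if_neg h1, zero_add]
      by_cases h2 : j + 1 = i0
      · rw [if_pos h2, if_pos h2]
      · rw [if_neg h2, if_neg h2, zero_mul]
  simp_rw [hsplit]
  rw [Finset.sum_add_distrib]
  rw [Finset.sum_ite_eq' (range (n + 1)) (i0 + 1) (fun j => qIntR q (i0 + 1) * u j)]
  have hrow := gpoly_row q hq n k i0 hk hi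
  have hB : (∑ j ∈ range (n + 1), if j + 1 = i0 then q ^ j * qIntR q (n + 1 - i0) * u j else 0)
      = if 1 ≤ i0 then q ^ (i0 - 1) * qIntR q (n + 1 - i0) * u (i0 - 1) else 0 := by
    by_cases hz : 1 ≤ i0
    · have hcond : ∀ j : ℕ, (j + 1 = i0) ↔ (j = i0 - 1) := fun j => by omega
      simp_rw [hcond]
      rw [Finset.sum_ite_eq' (range (n + 1)) (i0 - 1)
        (fun j => q ^ j * qIntR q (n + 1 - i0) * u j)]
      rw [if_pos (by simp; omega), if_pos hz]
    · have hcond : ∀ j : ℕ, ¬ (j + 1 = i0) := fun j => by omega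
      simp only [hcond, if_false, Finset.sum_const_zero]
      rw [if_neg hz]
  rw [hB]
  by_cases hin : i0 + 1 ∈ range (n + 1)
  · rw [if_pos hin]
    exact hrow
  · rw [if_neg hin]
    have h0 : (gpoly q n k).coeff (i0 + 1) = 0 := by
      apply Polynomial.coeff_eq_zero_of_natDegree_lt
      have := gpoly_natDegree_le q n k hk
      simp only [Finset.mem_range] at hin
      omega
    rw [h0, mul_zero, zero_add] at hrow
    rw [zero_add]
    exact hrow

lemma isRoot_charpoly_Kq (q : ℝ) (hq : 2 ≤ q) (n k : ℕ) (hk : k ≤ n) :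
    ((Kq q n).charpoly).IsRoot (qIntR q (n - k) - qIntR q k) := by
  set c := qIntR q (n - k) - qIntR q k with hc
  have heval : (Kq q n).charpoly.eval c
      = (Matrix.diagonal (fun _ : Fin (n + 1) => c) - Kq q n).det := by
    rw [Matrix.charpoly, ← Polynomial.coe_evalRingHom, RingHom.map_det]
    congr 1
    ext a b
    by_cases hab : a = b
    · subst hab
      simp [Matrix.charmatrix_apply_eq, Matrix.diagonal]
    · simp [Matrix.charmatrix_apply_ne _ _ _ hab, Matrix.diagonal_apply_ne _ hab]
  rw [Polynomial.IsRoot, heval, ← Matrix.det_transpose, Matrix.transpose_sub,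
    Matrix.diagonal_transpose, ← Matrix.exists_mulVec_eq_zero_iff]
  refine ⟨fun j => (gpoly q n k).coeff (j : ℕ), ?_, ?_⟩
  · intro h0
    have h1 := congrFun h0 ⟨0, by omega⟩
    simp only [Pi.zero_apply] at h1
    rw [gpoly_coeff_zero] at h1
    exact one_ne_zero h1
  · funext i
    rw [Matrix.sub_mulVec]
    have hd : (Matrix.diagonal (fun _ : Fin (n + 1) => c) *ᵥ
        (fun j => (gpoly q n k).coeff (j : ℕ))) i = c * (gpoly q n k).coeff (i : ℕ) :=
      Matrix.mulVec_diagonal _ _ _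
    have ht : ((Kq q n)ᵀ *ᵥ (fun j => (gpoly q n k).coeff (j : ℕ))) i
        = ∑ j : Fin (n + 1), Kq q n j i * (gpoly q n k).coeff (j : ℕ) := by
      simp [Matrix.mulVec, dotProduct, Matrix.transpose_apply]
    rw [Pi.sub_apply, hd, ht, gpoly_eigen q hq n k hk i]
    simp only [Pi.zero_apply, hc]
    ring

lemma qIntR_lt (q : ℝ) (hq : 2 ≤ q) {a b : ℕ} (h : a < b) : qIntR q a < qIntR q b := by
  have hq0 : (0 : ℝ) < q := by linarith
  refine Finset.sum_lt_sum_of_subset (Finset.range_subset_range.mpr h.le)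
    (i := a) (by simp [h]) (by simp) (by positivity) ?_
  intro j _ _
  positivity

open Polynomial in
/-- The characteristic polynomial of `K_q(n)` equals
`∏_{k=0}^{n} (x − ((n−k)_q − (k)_q))`; equivalently, the eigenvalues of `K_q(n)` are
`(n−k)_q − (k)_q` for `k = 0, 1, …, n`. -/
theorem charpoly_Kq (q : ℝ) (hq : 2 ≤ q) (n : ℕ) :
    (Kq q n).charpoly =
      ∏ k ∈ Finset.range (n + 1), (X - C (qIntR q (n - k) - qIntR q k)) := by
  set lam : ℕ → ℝ := fun k => qIntR q (n - k) - qIntR q k with hlam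
  have hanti : ∀ a b : ℕ, a < b → b ≤ n → lam b < lam a := by
    intro a b hab hbn
    have h1 : qIntR q (n - b) ≤ qIntR q (n - a) := by
      rcases Nat.lt_or_ge (n - b) (n - a) with h | h
      · exact (qIntR_lt q hq h).le
      · have : n - b = n - a := by omega
        rw [this]
    have h2 : qIntR q a < qIntR q b := qIntR_lt q hq hab
    simp only [hlam]
    linarith
  have hinj : ∀ a ∈ Finset.range (n + 1), ∀ b ∈ Finset.range (n + 1),
      a ≠ b → lam a ≠ lam b := by
    intro a ha b hb hab
    simp only [Finset.mem_range] at ha hb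
    rcases Nat.lt_or_ge a b with h | h
    · exact fun he => absurd he.symm (ne_of_lt (hanti a b h (by omega)))
    · exact fun he => absurd he (ne_of_lt (hanti b a (by omega) (by omega)))
  have hdvd : (∏ k ∈ Finset.range (n + 1), (X - C (lam k))) ∣ (Kq q n).charpoly := by
    apply Finset.prod_dvd_of_coprime
    · intro a ha b hb hab
      exact Polynomial.isCoprime_X_sub_C_of_isUnit_sub
        (IsUnit.mk0 _ (sub_ne_zero.mpr (hinj a ha b hb hab)))
    · intro k hk
      rw [Polynomial.dvd_iff_isRoot]
      exact isRoot_charpoly_Kq q hq n k (by simpa [Nat.lt_succ_iff] using hk)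
  have hPmonic : (∏ k ∈ Finset.range (n + 1), (X - C (lam k))).Monic :=
    monic_prod_of_monic _ _ fun k _ => monic_X_sub_C _
  have hPdeg : (∏ k ∈ Finset.range (n + 1), (X - C (lam k))).natDegree = n + 1 := by
    rw [Polynomial.natDegree_prod _ _ (fun k _ => X_sub_C_ne_zero _)]
    simp [natDegree_X_sub_C]
  obtain ⟨v, hv⟩ := hdvd
  have hcm : (Kq q n).charpoly.Monic := (Kq q n).charpoly_monic
  have hvm : v.Monic := hPmonic.of_mul_monic_left (hv ▸ hcm)
  have hcd : (Kq q n).charpoly.natDegree = n + 1 := by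
    rw [(Kq q n).charpoly_natDegree_eq_dim, Fintype.card_fin]
  have hvd : v.natDegree = 0 := by
    have := hcd
    rw [hv, hPmonic.natDegree_mul hvm, hPdeg] at this
    omega
  have hv1 : v = 1 := hvm.natDegree_eq_zero.mp hvd
  rw [hv, hv1, mul_one]
end

section
/- Fix 0 ≤ k ≤ n and let v ∈ ℝ^{n+1} be the vector whose component indexed by i (0 ≤ i ≤ n) is v_i = ∑_{j=0}^{min(i,k)} q^j · [∏_{l=0}^{j−1} (1 − q^{l−i})(1 − q^{l−k})(1 + q^{k−n+l})] / [∏_{l=0}^{j−1} (1 − q^{l+1})(1 − q^{l−n})] (the terminating basic hypergeometric series ₃φ₂(q^{−i}, q^{−k}, −q^{k−n}; 0, q^{−n}; q, q)). Then v ≠ 0 (indeed v_0 = 1) and K_q(n) v = ((n−k)_q − (k)_q) v, i.e., v is a right eigenvector of K_q(n) with eigenvalue (n−k)_q − (k)_q. -/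
/-- The vector whose `i`-th entry is the terminating basic hypergeometric series
`₃φ₂(q^{−i}, q^{−k}, −q^{k−n}; 0, q^{−n}; q, q)`. -/
noncomputable def hypVec (q : ℝ) (n k : ℕ) : Fin (n + 1) → ℝ := fun i =>
  ∑ j ∈ Finset.range (min (i : ℕ) k + 1),
    q ^ j *
      (∏ l ∈ Finset.range j,
        (1 - q ^ ((l : ℤ) - (i : ℕ))) * (1 - q ^ ((l : ℤ) - (k : ℤ))) *
          (1 + q ^ ((k : ℤ) - (n : ℤ) + (l : ℤ)))) /
      (∏ l ∈ Finset.range j,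
        (1 - q ^ ((l : ℤ) + 1)) * (1 - q ^ ((l : ℤ) - (n : ℤ))))

namespace KqAux

noncomputable def Aj (q : ℝ) (n k j : ℕ) : ℝ :=
  q ^ j * (∏ l ∈ Finset.range j,
      (1 - q ^ ((l : ℤ) - (k : ℤ))) * (1 + q ^ ((k : ℤ) - (n : ℤ) + (l : ℤ)))) /
    (∏ l ∈ Finset.range j,
      (1 - q ^ ((l : ℤ) + 1)) * (1 - q ^ ((l : ℤ) - (n : ℤ))))

noncomputable def Tj (q x : ℝ) (j : ℕ) : ℝ := ∏ l ∈ Finset.range j, (1 - q ^ l * x)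

noncomputable def Wf (q : ℝ) (n k : ℕ) (x : ℝ) : ℝ :=
  ∑ j ∈ Finset.range (k + 1), Aj q n k j * Tj q x j

noncomputable def Vv (q : ℝ) (n k m : ℕ) : ℝ := Wf q n k (q ^ (-(m : ℤ)))

noncomputable def Ut (q : ℝ) (n k : ℕ) (x : ℝ) : ℕ → ℝ
  | 0 => 0
  | (j+1) => Aj q n k (j+1) * ((q ^ (j+1) - 1) * (q ^ ((n:ℤ) - (j:ℤ) - 1) - q⁻¹)) * x * Tj q x j

variable {q : ℝ} (hq : 2 ≤ q)
include hq

lemma hq0 : q ≠ 0 := by intro h; rw [h] at hq; norm_num at hq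
lemma hq1 : (1:ℝ) < q := by linarith

lemma den_fac1_ne (l : ℕ) : (1 - q ^ ((l : ℤ) + 1)) ≠ 0 := by
  have h1 : (1:ℝ) < q ^ ((l:ℤ) + 1) := by
    rw [show ((l:ℤ)+1) = ((l+1 : ℕ) : ℤ) by push_cast; ring, zpow_natCast]
    exact one_lt_pow₀ (hq1 hq) (by omega)
  linarith

lemma den_fac2_ne {l n : ℕ} (h : l < n) : (1 - q ^ ((l : ℤ) - (n : ℤ))) ≠ 0 := by
  have h1 : q ^ ((l:ℤ) - (n:ℤ)) < 1 := by
    rw [zpow_sub₀ (hq0 hq), zpow_natCast, zpow_natCast, div_lt_one (by positivity)]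
    exact pow_lt_pow_right₀ (hq1 hq) h
  linarith

lemma den_ne {j n : ℕ} (h : j ≤ n) :
    (∏ l ∈ Finset.range j, (1 - q ^ ((l : ℤ) + 1)) * (1 - q ^ ((l : ℤ) - (n : ℤ)))) ≠ 0 := by
  refine Finset.prod_ne_zero_iff.mpr fun l hl => ?_
  rw [Finset.mem_range] at hl
  exact mul_ne_zero (den_fac1_ne hq l) (den_fac2_ne hq (by omega))

omit hq in
lemma Tj_succ (x : ℝ) (j : ℕ) : Tj q x (j+1) = Tj q x j * (1 - q ^ j * x) :=
  Finset.prod_range_succ _ _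

omit hq in
lemma Tj_shift_mul (x : ℝ) (j : ℕ) :
    (1 - x) * Tj q (q * x) j = Tj q x j * (1 - q ^ j * x) := by
  have h2 : (∏ l ∈ Finset.range j, (1 - q ^ (l+1) * x)) = Tj q (q * x) j := by
    refine Finset.prod_congr rfl fun l _ => ?_
    rw [pow_succ]; ring
  have e1 : (∏ l ∈ Finset.range (j+1), (1 - q ^ l * x)) = Tj q (q * x) j * (1 - x) := by
    rw [Finset.prod_range_succ', h2]; norm_num
  have e2 : (∏ l ∈ Finset.range (j+1), (1 - q ^ l * x)) = Tj q x j * (1 - q ^ j * x) :=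
    Finset.prod_range_succ _ _
  rw [mul_comm, ← e1, e2]

lemma Tj_div (x : ℝ) (m : ℕ) : Tj q (x / q) (m+1) = Tj q x m * (1 - x / q) := by
  have h : Tj q (x/q) (m+1)
      = (∏ l ∈ Finset.range m, (1 - q ^ (l+1) * (x/q))) * (1 - q ^ 0 * (x/q)) :=
    Finset.prod_range_succ' _ _
  rw [h]
  have h2 : (∏ l ∈ Finset.range m, (1 - q ^ (l+1) * (x/q))) = Tj q x m := by
    refine Finset.prod_congr rfl fun l _ => ?_
    rw [pow_succ]
    have := hq0 hq
    field_simp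
  rw [h2]; simp

lemma Tj_eq_zero {i j : ℕ} (h : i < j) : Tj q (q ^ (-(i:ℤ))) j = 0 := by
  refine Finset.prod_eq_zero (Finset.mem_range.mpr h) ?_
  rw [← zpow_natCast q i, ← zpow_add₀ (hq0 hq)]
  simp

omit hq in
lemma Aj_zero (n k : ℕ) : Aj q n k 0 = 1 := by simp [Aj]

omit hq in
lemma Aj_k_succ (n k : ℕ) : Aj q n k (k+1) = 0 := by
  have h : (∏ l ∈ Finset.range (k+1),
      (1 - q ^ ((l : ℤ) - (k : ℤ))) * (1 + q ^ ((k : ℤ) - (n : ℤ) + (l : ℤ)))) = 0 := by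
    refine Finset.prod_eq_zero (Finset.mem_range.mpr (Nat.lt_succ_self k)) ?_
    simp
  rw [Aj, h]; simp

lemma Aj_succ {n k : ℕ} (j : ℕ) (hjn : j < n) :
    Aj q n k (j+1) = Aj q n k j *
      (q * ((1 - q ^ ((j : ℤ) - (k : ℤ))) * (1 + q ^ ((k : ℤ) - (n : ℤ) + (j : ℤ)))) /
        ((1 - q ^ ((j : ℤ) + 1)) * (1 - q ^ ((j : ℤ) - (n : ℤ))))) := by
  rw [Aj, Aj, Finset.prod_range_succ, Finset.prod_range_succ, pow_succ]
  have hD := den_ne hq (show j ≤ n by omega)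
  have hg := mul_ne_zero (den_fac1_ne hq j) (den_fac2_ne hq hjn)
  field_simp

lemma key {n k : ℕ} (hn : 1 ≤ n) (hk : k ≤ n) (x : ℝ) (j : ℕ) (hj : j ≤ k) :
    (1-x) * (Aj q n k j * Tj q (q*x) j) + (q^n*x - 1) * (Aj q n k j * Tj q (x/q) j)
      - x * (q^((n:ℤ)-(k:ℤ)) - q^((k:ℤ))) * (Aj q n k j * Tj q x j)
      = Ut q n k x j - Ut q n k x (j+1) := by
  have hq0 : q ≠ 0 := hq0 hq
  have hq1 : (1:ℝ) < q := hq1 hq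
  match j with
  | 0 =>
    have hA1 : Aj q n k 1 = q ^ 1 * ((1 - q ^ ((0:ℤ) - (k:ℤ))) * (1 + q ^ ((k:ℤ) - (n:ℤ) + 0))) /
        ((1 - q ^ ((0:ℤ) + 1)) * (1 - q ^ ((0:ℤ) - (n:ℤ)))) := by
      rw [Aj, Finset.prod_range_one, Finset.prod_range_one]
      norm_num
    simp only [Ut, Aj, Tj, Finset.prod_range_zero, Finset.prod_range_succ, hA1]
    have h1 : (1:ℝ) - q ≠ 0 := by nlinarith
    have hqn : (1:ℝ) < q^n := one_lt_pow₀ hq1 (by omega)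
    have h2 : q^n - 1 ≠ 0 := by nlinarith
    have h3 : (1:ℝ) - q^n ≠ 0 := by nlinarith
    simp only [zpow_sub₀ hq0, zpow_add₀ hq0, zpow_natCast, zpow_one, zpow_zero, zero_sub,
      zpow_neg]
    field_simp [h1, h2, h3]
    ring
  | (m+1) =>
    have e2 : Tj q (x/q) (m+1) = Tj q x m * (1 - x/q) := Tj_div hq x m
    have e3 : Tj q x (m+1) = Tj q x m * (1 - q^m*x) := Tj_succ x m
    have e1' : (1-x) * Tj q (q*x) (m+1) = Tj q x m * (1 - q^m*x) * (1 - q^(m+1)*x) := by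
      rw [Tj_shift_mul x (m+1), e3]
    have hm : q^m ≠ 0 := pow_ne_zero _ hq0
    have hnn : q^n ≠ 0 := pow_ne_zero _ hq0
    rcases Nat.lt_or_ge (m+1) k with hmk | hge
    · -- step case
      have scalar2 : (1 - q^(m+1)*x)*(1 - q^m*x) + (q^n*x - 1)*(1 - x/q)
          - x*(q^((n:ℤ)-(k:ℤ)) - q^((k:ℤ)))*(1 - q^m*x)
          = (q^(m+1)-1)*(q^((n:ℤ)-(m:ℤ)-1) - q⁻¹)*x
            - (q * ((1 - q ^ (((m+1:ℕ):ℤ) - (k:ℤ))) * (1 + q ^ ((k:ℤ) - (n:ℤ) + ((m+1:ℕ):ℤ)))) /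
                ((1 - q ^ (((m+1:ℕ):ℤ) + 1)) * (1 - q ^ (((m+1:ℕ):ℤ) - (n:ℤ))))) *
              ((q ^ (m+2) - 1) * (q ^ ((n:ℤ) - ((m+1:ℕ):ℤ) - 1) - q⁻¹)) * x * (1 - q^m*x) := by
        have hkk : q^k ≠ 0 := pow_ne_zero _ hq0
        have hd1 : (1:ℝ) - q^(m+2) ≠ 0 := by
          have : (1:ℝ) < q^(m+2) := one_lt_pow₀ hq1 (by omega)
          linarith
        have hd2 : q^n - q^m*q ≠ 0 := by
          have h1 : q^(m+1) < q^n := pow_lt_pow_right₀ hq1 (by omega)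
          rw [pow_succ] at h1; nlinarith [pow_pos (show (0:ℝ) < q by linarith) m]
        have hc1 : (((m+1:ℕ):ℤ) - (k:ℤ)) = (m:ℤ) + 1 - (k:ℤ) := by push_cast; ring
        have hc2 : ((k:ℤ) - (n:ℤ) + ((m+1:ℕ):ℤ)) = (k:ℤ) + ((m:ℤ) + 1) - (n:ℤ) := by push_cast; ring
        have hc3 : (((m+1:ℕ):ℤ) + 1) = ((m+2:ℕ):ℤ) := by push_cast; ring
        have hc4 : (((m+1:ℕ):ℤ) - (n:ℤ)) = (m:ℤ) + 1 - (n:ℤ) := by push_cast; ring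
        have hc5 : ((n:ℤ) - ((m+1:ℕ):ℤ) - 1) = (n:ℤ) - ((m:ℤ)+1) - 1 := by push_cast; ring
        rw [hc1, hc2, hc3, hc4, hc5, zpow_natCast]
        simp only [zpow_sub₀ hq0, zpow_add₀ hq0, zpow_one, zpow_natCast]
        field_simp
        ring
      have e4 : Aj q n k (m+2) = Aj q n k (m+1) *
          (q * ((1 - q ^ (((m+1:ℕ):ℤ) - (k:ℤ))) * (1 + q ^ ((k:ℤ) - (n:ℤ) + ((m+1:ℕ):ℤ)))) /
            ((1 - q ^ (((m+1:ℕ):ℤ) + 1)) * (1 - q ^ (((m+1:ℕ):ℤ) - (n:ℤ))))) :=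
        Aj_succ hq (m+1) (by omega)
      simp only [Ut]
      rw [e2, e3, e4]
      linear_combination Aj q n k (m+1) * e1' + Aj q n k (m+1) * Tj q x m * scalar2
    · -- j = k case
      have hjk : m + 1 = k := by omega
      subst hjk
      have scalar : (1 - q^(m+1)*x)*(1 - q^m*x) + (q^n*x - 1)*(1 - x/q)
          - x*(q^((n:ℤ)-((m+1:ℕ):ℤ)) - q^(((m+1:ℕ)):ℤ))*(1 - q^m*x)
          = (q^(m+1)-1)*(q^((n:ℤ)-(m:ℤ)-1) - q⁻¹)*x := by
        have hcast : ((n:ℤ)-((m+1:ℕ):ℤ)) = (n:ℤ) - (m:ℤ) - 1 := by push_cast; ring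
        rw [hcast, zpow_natCast]
        simp only [zpow_sub₀ hq0, zpow_one, zpow_natCast]
        field_simp
        ring
      simp only [Ut]
      rw [e2, e3, Aj_k_succ]
      linear_combination Aj q n (m+1) (m+1) * e1' + Aj q n (m+1) (m+1) * Tj q x m * scalar

lemma master {n k : ℕ} (hn : 1 ≤ n) (hk : k ≤ n) (x : ℝ) :
    (1-x) * Wf q n k (q*x) + (q^n*x - 1) * Wf q n k (x/q)
      = x * (q^((n:ℤ)-(k:ℤ)) - q^((k:ℤ))) * Wf q n k x := by
  have h0 : ∑ j ∈ Finset.range (k+1),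
      ((1-x) * (Aj q n k j * Tj q (q*x) j) + (q^n*x - 1) * (Aj q n k j * Tj q (x/q) j)
        - x * (q^((n:ℤ)-(k:ℤ)) - q^((k:ℤ))) * (Aj q n k j * Tj q x j)) = 0 := by
    rw [Finset.sum_congr rfl fun j hj => key hq hn hk x j (by
      rw [Finset.mem_range] at hj; omega)]
    rw [Finset.sum_range_sub' (Ut q n k x) (k+1)]
    simp only [Ut, Aj_k_succ]
    ring
  have expand : (1-x) * Wf q n k (q*x) + (q^n*x - 1) * Wf q n k (x/q)
      - x * (q^((n:ℤ)-(k:ℤ)) - q^((k:ℤ))) * Wf q n k x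
      = ∑ j ∈ Finset.range (k+1),
      ((1-x) * (Aj q n k j * Tj q (q*x) j) + (q^n*x - 1) * (Aj q n k j * Tj q (x/q) j)
        - x * (q^((n:ℤ)-(k:ℤ)) - q^((k:ℤ))) * (Aj q n k j * Tj q x j)) := by
    simp only [Wf, Finset.mul_sum]
    rw [← Finset.sum_add_distrib, ← Finset.sum_sub_distrib]
  have := expand.trans h0
  linarith

lemma hyp_eq {n k : ℕ} (i : Fin (n + 1)) :
    hypVec q n k i = Vv q n k (i : ℕ) := by
  have hq0' : q ≠ 0 := hq0 hq
  rw [hypVec, Vv, Wf]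
  have termeq : ∀ j : ℕ,
      q ^ j * (∏ l ∈ Finset.range j,
          (1 - q ^ ((l:ℤ) - ((i:ℕ):ℤ))) * (1 - q ^ ((l:ℤ) - (k:ℤ)))
            * (1 + q ^ ((k:ℤ) - (n:ℤ) + (l:ℤ)))) /
        (∏ l ∈ Finset.range j, (1 - q ^ ((l:ℤ) + 1)) * (1 - q ^ ((l:ℤ) - (n:ℤ))))
      = Aj q n k j * Tj q (q ^ (-((i:ℕ):ℤ))) j := by
    intro j
    have hsplit : (∏ l ∈ Finset.range j,
        (1 - q ^ ((l:ℤ) - ((i:ℕ):ℤ))) * (1 - q ^ ((l:ℤ) - (k:ℤ)))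
          * (1 + q ^ ((k:ℤ) - (n:ℤ) + (l:ℤ))))
        = Tj q (q ^ (-((i:ℕ):ℤ))) j * (∏ l ∈ Finset.range j,
            (1 - q ^ ((l:ℤ) - (k:ℤ))) * (1 + q ^ ((k:ℤ) - (n:ℤ) + (l:ℤ)))) := by
      rw [Tj, ← Finset.prod_mul_distrib]
      refine Finset.prod_congr rfl fun l _ => ?_
      rw [← zpow_natCast q l, ← zpow_add₀ hq0',
        show (l:ℤ) + -((i:ℕ):ℤ) = (l:ℤ) - ((i:ℕ):ℤ) by ring]
      ring
    rw [hsplit, Aj]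
    ring
  rw [Finset.sum_congr rfl fun j _ => termeq j]
  refine Finset.sum_subset (Finset.range_subset_range.mpr (by omega)) ?_
  intro j hj hj2
  rw [Finset.mem_range] at hj hj2
  have hij : (i:ℕ) < j := by omega
  rw [Tj_eq_zero hq hij, mul_zero]

lemma rec {n k : ℕ} (hn : 1 ≤ n) (hk : k ≤ n) (i : ℕ) :
    (q^i - 1) * Vv q n k (i-1) + (q^n - q^i) * Vv q n k (i+1)
      = (q^((n:ℤ)-(k:ℤ)) - q^((k:ℤ))) * Vv q n k i := by
  have hq0' : q ≠ 0 := hq0 hq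
  match i with
  | 0 =>
    have h := master hq hn hk 1
    rw [mul_one, mul_one] at h
    have e0 : Vv q n k 0 = Wf q n k 1 := by rw [Vv]; norm_num
    have e1 : Vv q n k 1 = Wf q n k (1/q) := by
      rw [Vv]; congr 1
      rw [show (-((1:ℕ):ℤ)) = -1 by norm_num, zpow_neg, zpow_one, one_div]
    rw [show (0:ℕ)-1 = 0 from rfl, e0, e1, pow_zero]
    linear_combination h
  | (m+1) =>
    have h := master hq hn hk (q^(-((m+1:ℕ):ℤ)))
    have h1 : q * q^(-((m+1:ℕ):ℤ)) = q^(-((m:ℕ):ℤ)) := by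
      rw [show (-((m:ℕ):ℤ)) = 1 + -((m+1:ℕ):ℤ) by push_cast; ring, zpow_add₀ hq0', zpow_one]
    have h2 : q^(-((m+1:ℕ):ℤ)) / q = q^(-((m+2:ℕ):ℤ)) := by
      rw [show (-((m+2:ℕ):ℤ)) = -((m+1:ℕ):ℤ) - 1 by push_cast; ring, zpow_sub₀ hq0', zpow_one]
    rw [h1, h2] at h
    have hx : q^(m+1) * q^(-((m+1:ℕ):ℤ)) = 1 := by
      rw [← zpow_natCast q (m+1), ← zpow_add₀ hq0',
        show ((m+1:ℕ):ℤ) + -((m+1:ℕ):ℤ) = 0 from by ring, zpow_zero]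
    show (q^(m+1) - 1) * Vv q n k m + (q^n - q^(m+1)) * Vv q n k (m+2)
      = (q^((n:ℤ)-(k:ℤ)) - q^((k:ℤ))) * Vv q n k (m+1)
    rw [Vv, Vv, Vv]
    linear_combination q^(m+1) * h
      + (Wf q n k (q^(-((m:ℕ):ℤ))) - q^n * Wf q n k (q^(-((m+2:ℕ):ℤ)))
        + (q^((n:ℤ)-(k:ℤ)) - q^((k:ℤ))) * Wf q n k (q^(-((m+1:ℕ):ℤ)))) * hx

lemma recnat {n k : ℕ} (hn : 1 ≤ n) (hk : k ≤ n) (i : ℕ) (hi : i ≤ n) :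
    qIntR q i * Vv q n k (i-1) + q^i * qIntR q (n-i) * Vv q n k (i+1)
      = (qIntR q (n-k) - qIntR q k) * Vv q n k i := by
  have hgm : ∀ m : ℕ, (q-1) * qIntR q m = q^m - 1 := fun m => by
    rw [qIntR, mul_comm]; exact geom_sum_mul q m
  have h := rec hq hn hk i
  have hnk : q^((n:ℤ)-(k:ℤ)) = q^(n-k) := by
    rw [← zpow_natCast q (n-k)]; congr 1; omega
  have hkc : q^((k:ℤ)) = q^k := zpow_natCast q k
  rw [hnk, hkc] at h
  have hpw : q^i * q^(n-i) = q^n := by rw [← pow_add]; congr 1; omega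
  have hq1' : q - 1 ≠ 0 := sub_ne_zero.mpr (by linarith)
  apply mul_left_cancel₀ hq1'
  linear_combination h + Vv q n k (i-1) * hgm i + q^i * Vv q n k (i+1) * hgm (n-i)
    - Vv q n k i * hgm (n-k) + Vv q n k i * hgm k + Vv q n k (i+1) * hpw

end KqAux

open KqAux in
/-- The vector `hypVec q n k` is a (nonzero, with first entry `1`) right eigenvector
of `K_q(n)` with eigenvalue `(n−k)_q − (k)_q`. -/
theorem Kq_eigenvector (q : ℝ) (hq : 2 ≤ q) (n k : ℕ) (hk : k ≤ n) :
    hypVec q n k ≠ 0 ∧ hypVec q n k 0 = 1 ∧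
      (Kq q n).mulVec (hypVec q n k) =
        (qIntR q (n - k) - qIntR q k) • hypVec q n k := by
  have hv0 : hypVec q n k 0 = 1 := by
    rw [hypVec]
    simp
  refine ⟨?_, hv0, ?_⟩
  · intro h
    have h0 := congrFun h 0
    rw [hv0] at h0
    norm_num at h0
  · rcases Nat.eq_zero_or_pos n with rfl | hn
    · have hk0 : k = 0 := by omega
      subst hk0
      funext i
      have hi : i = 0 := Fin.ext (by omega)
      subst hi
      simp [Matrix.mulVec, dotProduct, Kq, qIntR]
    · funext i
      have hVj : ∀ j : Fin (n+1), hypVec q n k j = Vv q n k (j:ℕ) :=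
        fun j => hyp_eq hq j
      have hrew : ∀ j : Fin (n+1), Kq q n i j * hypVec q n k j
          = (if (i:ℕ) = (j:ℕ) + 1 then qIntR q ((j:ℕ)+1) * Vv q n k (j:ℕ) else 0)
             + (if (i:ℕ) + 1 = (j:ℕ) then q^(i:ℕ) * qIntR q (n+1-(j:ℕ)) * Vv q n k (j:ℕ) else 0) := by
        intro j
        rw [hVj j, Kq]
        by_cases h1 : (i:ℕ) = (j:ℕ)+1
        · have h2 : ¬((i:ℕ)+1 = (j:ℕ)) := by omega
          simp only [if_pos h1, if_neg h2]
          ring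
        · by_cases h2 : (i:ℕ)+1 = (j:ℕ)
          · simp only [if_neg h1, if_pos h2]
            ring
          · simp only [if_neg h1, if_neg h2]
            ring
      have claim1 : ∀ iv : ℕ, iv ≤ n →
          (∑ m ∈ Finset.range (n+1), if iv = m + 1 then qIntR q (m+1) * Vv q n k m else 0)
            = qIntR q iv * Vv q n k (iv - 1) := by
        intro iv hiv
        match iv with
        | 0 =>
          rw [Finset.sum_eq_zero fun m _ => by rw [if_neg (by omega)]]
          simp [qIntR]
        | (w+1) =>
          rw [Finset.sum_congr rfl fun m _ =>
            if_congr (show (w+1 = m+1) ↔ (m = w) by omega) rfl rfl]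
          rw [Finset.sum_ite_eq' (Finset.range (n+1)) w
            (fun m => qIntR q (m+1) * Vv q n k m)]
          rw [if_pos (Finset.mem_range.mpr (by omega))]
          rw [Nat.add_sub_cancel]
      have claim2 : ∀ iv : ℕ, iv ≤ n →
          (∑ m ∈ Finset.range (n+1),
            if iv + 1 = m then q^iv * qIntR q (n+1-m) * Vv q n k m else 0)
            = q^iv * qIntR q (n-iv) * Vv q n k (iv + 1) := by
        intro iv hiv
        rw [Finset.sum_congr rfl fun m _ =>
          if_congr (show (iv+1 = m) ↔ (m = iv+1) by omega) rfl rfl]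
        rw [Finset.sum_ite_eq' (Finset.range (n+1))
          (iv+1) (fun m => q^iv * qIntR q (n+1-m) * Vv q n k m)]
        rcases Nat.lt_or_ge iv n with h | h
        · rw [if_pos (Finset.mem_range.mpr (by omega)),
            show n+1-(iv+1) = n-iv from by omega]
        · rw [if_neg (by rw [Finset.mem_range]; omega)]
          rw [show n - iv = 0 from by omega]
          simp [qIntR]
      have hile : (i:ℕ) ≤ n := Fin.is_le i
      have hstep : (Kq q n).mulVec (hypVec q n k) i
          = ∑ m ∈ Finset.range (n+1),
            ((if (i:ℕ) = m + 1 then qIntR q (m+1) * Vv q n k m else 0)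
             + (if (i:ℕ) + 1 = m then q^(i:ℕ) * qIntR q (n+1-m) * Vv q n k m else 0)) := by
        calc (Kq q n).mulVec (hypVec q n k) i
            = ∑ j : Fin (n+1), Kq q n i j * hypVec q n k j := rfl
          _ = ∑ j : Fin (n+1),
              ((if (i:ℕ) = (j:ℕ) + 1 then qIntR q ((j:ℕ)+1) * Vv q n k (j:ℕ) else 0)
               + (if (i:ℕ) + 1 = (j:ℕ) then q^(i:ℕ) * qIntR q (n+1-(j:ℕ)) * Vv q n k (j:ℕ) else 0)) :=
            Finset.sum_congr rfl fun j _ => hrew j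
          _ = _ := Fin.sum_univ_eq_sum_range (fun m =>
              (if (i:ℕ) = m + 1 then qIntR q (m+1) * Vv q n k m else 0)
               + (if (i:ℕ) + 1 = m then q^(i:ℕ) * qIntR q (n+1-m) * Vv q n k m else 0)) (n+1)
      rw [hstep, Finset.sum_add_distrib, claim1 (i:ℕ) hile, claim2 (i:ℕ) hile,
        recnat hq hn hk (i:ℕ) hile]
      rw [Pi.smul_apply, smul_eq_mul, hVj i]
end

section
/- For every X ∈ A_q(n+1), the orbit of X under the action of H(n+1, F_q) equals the equivalence class [X] := {Y ∈ A_q(n+1) : Y ∩ F_q^n = X ∩ F_q^n}. -/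
/-- The copy of `F^m` inside `F^n`: vectors whose coordinates of index `≥ m`
vanish. -/
def coordSpace (F : Type) [Field F] (n m : ℕ) : Submodule F (Fin n → F) where
  carrier := {v | ∀ i : Fin n, m ≤ (i : ℕ) → v i = 0}
  add_mem' := by
    intro a b ha hb i hi
    simp [ha i hi, hb i hi]
  zero_mem' := by intro i hi; rfl
  smul_mem' := by
    intro c v hv i hi
    simp [hv i hi]

/-- The element of the group `H(n+1, F_q)` with parameter `a ∈ F^n`: the matrix with
upper-left `n × n` block the identity, last row `(0, …, 0, 1)`, and last column
`(a_1, …, a_n, 1)ᵀ`. -/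
def hmat (F : Type) [Field F] (n : ℕ) (a : Fin n → F) :
    Matrix (Fin (n + 1)) (Fin (n + 1)) F :=
  fun i j =>
    if i = j then 1
    else if h : (i : ℕ) < n ∧ (j : ℕ) = n then a ⟨(i : ℕ), h.1⟩ else 0

lemma mem_coordSpace_iff {F : Type} [Field F] {n : ℕ} (v : Fin (n+1) → F) :
    v ∈ coordSpace F (n+1) n ↔ v (Fin.last n) = 0 := by
  constructor
  · intro h; exact h (Fin.last n) (by simp [Fin.last])
  · intro h i hi
    have hlt := i.isLt
    have : i = Fin.last n := by
      apply Fin.ext; simp [Fin.last]; omega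
    rwa [this]

lemma hmat_mulVec {F : Type} [Field F] {n : ℕ} (a : Fin n → F) (v : Fin (n+1) → F)
    (i : Fin (n+1)) :
    (hmat F n a).mulVec v i =
      v i + (if h : (i : ℕ) < n then a ⟨i, h⟩ else 0) * v (Fin.last n) := by
  rw [Matrix.mulVec, dotProduct]
  by_cases hi : (i : ℕ) < n
  · have hil : i ≠ Fin.last n := by
      intro h; rw [h] at hi; simp [Fin.last] at hi
    rw [Fintype.sum_eq_add i (Fin.last n) hil ?_]
    · simp [hmat, hi, hil, Fin.last]
      intro h; exact absurd h hil
    · intro c hc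
      obtain ⟨hci, hcl⟩ := hc
      have hc : ¬ ((c : ℕ) = n) := by
        intro h; exact hcl (Fin.ext (by simp [Fin.last, h]))
      have : hmat F n a i c = 0 := by
        simp [hmat, Ne.symm hci, hc]
      simp [this]
  · have hieq : i = Fin.last n := by
      have hlt := i.isLt
      apply Fin.ext; simp [Fin.last]; omega
    subst hieq
    rw [Fintype.sum_eq_single (Fin.last n) ?_]
    · simp [hmat, hi]
    · intro c hc
      have h1 : ¬ (Fin.last n = c) := fun h => hc h.symm
      have : hmat F n (a) (Fin.last n) c = 0 := by
        simp only [hmat]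
        rw [if_neg h1, dif_neg (by simp [Fin.last])]
      simp [this]

lemma hmat_last {F : Type} [Field F] {n : ℕ} (a : Fin n → F) (v : Fin (n+1) → F) :
    (hmat F n a).mulVec v (Fin.last n) = v (Fin.last n) := by
  rw [hmat_mulVec]; simp [Fin.last]

lemma hmat_fix {F : Type} [Field F] {n : ℕ} (a : Fin n → F) (v : Fin (n+1) → F)
    (hv : v (Fin.last n) = 0) : (hmat F n a).mulVec v = v := by
  funext i; rw [hmat_mulVec, hv, mul_zero, add_zero]

/-- For `X ∈ A_q(n+1)`, the orbit of `X` under the action of `H(n+1, F_q)` is the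
equivalence class `[X] = {Y ∈ A_q(n+1) : Y ∩ F^n = X ∩ F^n}`. -/
theorem orbit_eq_class (F : Type) [Field F] [Fintype F] (n : ℕ)
    (X : Submodule F (Fin (n + 1) → F)) (hX : ¬ X ≤ coordSpace F (n + 1) n) :
    ∀ Y : Submodule F (Fin (n + 1) → F),
      (∃ a : Fin n → F, Submodule.map (Matrix.mulVecLin (hmat F n a)) X = Y) ↔
        (¬ Y ≤ coordSpace F (n + 1) n ∧
          Y ⊓ coordSpace F (n + 1) n = X ⊓ coordSpace F (n + 1) n) := by
  intro Y
  constructor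
  · rintro ⟨a, rfl⟩
    constructor
    · obtain ⟨x, hxX, hxW⟩ := SetLike.not_le_iff_exists.mp hX
      rw [SetLike.not_le_iff_exists]
      refine ⟨(hmat F n a).mulVecLin x, Submodule.mem_map_of_mem hxX, ?_⟩
      rw [mem_coordSpace_iff] at hxW ⊢
      rwa [Matrix.mulVecLin_apply, hmat_last]
    · apply le_antisymm
      · intro z hz
        rw [Submodule.mem_inf] at hz
        obtain ⟨hz1, hzW⟩ := hz
        rw [Submodule.mem_map] at hz1
        obtain ⟨u, huX, rfl⟩ := hz1
        have hu : u (Fin.last n) = 0 := by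
          have := (mem_coordSpace_iff _).mp hzW
          rwa [Matrix.mulVecLin_apply, hmat_last] at this
        have heq : (hmat F n a).mulVecLin u = u := by
          rw [Matrix.mulVecLin_apply, hmat_fix a u hu]
        rw [heq]
        exact Submodule.mem_inf.mpr ⟨huX, (mem_coordSpace_iff _).mpr hu⟩
      · intro z hz
        rw [Submodule.mem_inf] at hz
        obtain ⟨hzX, hzW⟩ := hz
        have hzl : z (Fin.last n) = 0 := (mem_coordSpace_iff _).mp hzW
        refine Submodule.mem_inf.mpr ⟨Submodule.mem_map.mpr ⟨z, hzX, ?_⟩, hzW⟩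
        rw [Matrix.mulVecLin_apply, hmat_fix a z hzl]
  · rintro ⟨hY, hcap⟩
    obtain ⟨x0, hx0X, hx0W⟩ := SetLike.not_le_iff_exists.mp hX
    obtain ⟨y0, hy0Y, hy0W⟩ := SetLike.not_le_iff_exists.mp hY
    rw [mem_coordSpace_iff] at hx0W hy0W
    set x : Fin (n+1) → F := (x0 (Fin.last n))⁻¹ • x0 with hxdef
    set y : Fin (n+1) → F := (y0 (Fin.last n))⁻¹ • y0 with hydef
    have hxX : x ∈ X := X.smul_mem _ hx0X
    have hyY : y ∈ Y := Y.smul_mem _ hy0Y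
    have hxl : x (Fin.last n) = 1 := by
      simp [hxdef, inv_mul_cancel₀ hx0W]
    have hyl : y (Fin.last n) = 1 := by
      simp [hydef, inv_mul_cancel₀ hy0W]
    set a : Fin n → F := fun i => y i.castSucc - x i.castSucc with hadef
    refine ⟨a, ?_⟩
    have key : (hmat F n a).mulVec x = y := by
      funext i
      rw [hmat_mulVec, hxl, mul_one]
      by_cases hi : (i : ℕ) < n
      · rw [dif_pos hi]
        have hcs : (⟨(i : ℕ), hi⟩ : Fin n).castSucc = i := by
          apply Fin.ext; simp
        simp only [hadef, hcs]
        ring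
      · have hieq : i = Fin.last n := by
          have := i.isLt
          apply Fin.ext; simp [Fin.last]; omega
        subst hieq
        rw [dif_neg hi, hxl, hyl, add_zero]
    apply le_antisymm
    · intro z hz
      rw [Submodule.mem_map] at hz
      obtain ⟨u, huX, rfl⟩ := hz
      have hwW : (u - u (Fin.last n) • x) (Fin.last n) = 0 := by
        simp [hxl]
      have hw : u - u (Fin.last n) • x ∈ X ⊓ coordSpace F (n+1) n :=
        Submodule.mem_inf.mpr ⟨X.sub_mem huX (X.smul_mem _ hxX),
          (mem_coordSpace_iff _).mpr hwW⟩
      rw [← hcap] at hw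
      have hwY : u - u (Fin.last n) • x ∈ Y := (Submodule.mem_inf.mp hw).1
      have hdec : (hmat F n a).mulVec u =
          u (Fin.last n) • y + (u - u (Fin.last n) • x) := by
        conv_lhs => rw [show u = u (Fin.last n) • x + (u - u (Fin.last n) • x) by module]
        rw [Matrix.mulVec_add, Matrix.mulVec_smul, key, hmat_fix a _ hwW]
      rw [Matrix.mulVecLin_apply, hdec]
      exact Y.add_mem (Y.smul_mem _ hyY) hwY
    · intro u huY
      rw [Submodule.mem_map]
      have hwW : (u - u (Fin.last n) • y) (Fin.last n) = 0 := by
        simp [hyl]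
      have hw : u - u (Fin.last n) • y ∈ Y ⊓ coordSpace F (n+1) n :=
        Submodule.mem_inf.mpr ⟨Y.sub_mem huY (Y.smul_mem _ hyY),
          (mem_coordSpace_iff _).mpr hwW⟩
      rw [hcap] at hw
      refine ⟨u (Fin.last n) • x + (u - u (Fin.last n) • y),
        X.add_mem (X.smul_mem _ hxX) (Submodule.mem_inf.mp hw).1, ?_⟩
      rw [Matrix.mulVecLin_apply, Matrix.mulVec_add, Matrix.mulVec_smul, key,
        hmat_fix a _ hwW]
      module
end

section
/- For 1 ≤ k ≤ n+1, the number of orbits of the action of H(n+1, F_q) on A_q(n+1, k) equals the Gaussian binomial coefficient [n choose k−1]_q. (Equivalently, the multiplicity of the trivial character in the permutation character of H(n+1,F_q) on ℂ[A_q(n+1,k)] is [n choose k−1]_q.) -/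
/-- The orbit of a subspace `X ⊆ F^(n+1)` under the action of `H(n+1, F_q)`. -/
def hOrbit (F : Type) [Field F] (n : ℕ) (X : Submodule F (Fin (n + 1) → F)) :
    Set (Submodule F (Fin (n + 1) → F)) :=
  {Y | ∃ a : Fin n → F, Submodule.map (Matrix.mulVecLin (hmat F n a)) X = Y}

/-- The Gaussian binomial coefficient `[n choose k]_q`: the number of
`k`-dimensional subspaces of `F^n`. -/
noncomputable def gaussBinom (F : Type) [Field F] [Fintype F] (n k : ℕ) : ℕ :=
  Nat.card {X : Submodule F (Fin n → F) // Module.finrank F X = k}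

namespace CardOrbitsAux

variable (F : Type) [Field F] (n : ℕ)

/-- restriction map -/
noncomputable def pr : (Fin (n + 1) → F) →ₗ[F] (Fin n → F) :=
  LinearMap.funLeft F F Fin.castSucc

/-- extension by zero -/
def ext : (Fin n → F) →ₗ[F] (Fin (n + 1) → F) where
  toFun v := Fin.snoc v 0
  map_add' a b := by
    funext i
    induction i using Fin.lastCases <;> simp
  map_smul' c a := by
    funext i
    induction i using Fin.lastCases <;> simp

variable {F n}

lemma ext_castSucc (a : Fin n → F) (i : Fin n) :
    ext F n a (Fin.castSucc i) = a i := by simp [ext]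

lemma ext_last (a : Fin n → F) : ext F n a (Fin.last n) = 0 := by simp [ext]

lemma pr_apply (v : Fin (n + 1) → F) (i : Fin n) :
    pr F n v i = v (Fin.castSucc i) := rfl

lemma pr_ext (a : Fin n → F) : pr F n (ext F n a) = a := by
  funext i; simp [pr_apply, ext_castSucc]

lemma mem_W {v : Fin (n + 1) → F} :
    v ∈ coordSpace F (n + 1) n ↔ v (Fin.last n) = 0 := by
  constructor
  · intro h
    exact h (Fin.last n) (by simp)
  · intro h i hi
    have : i = Fin.last n := by
      have := i.isLt
      apply Fin.ext
      simp only [Fin.val_last]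
      omega
    rw [this]; exact h

lemma ext_pr_of_mem {v : Fin (n + 1) → F} (hv : v ∈ coordSpace F (n + 1) n) :
    ext F n (pr F n v) = v := by
  funext i
  induction i using Fin.lastCases with
  | last => rw [ext_last, (mem_W.mp hv)]
  | cast j => rw [ext_castSucc, pr_apply]

lemma hmat_eq (a : Fin n → F) :
    hmat F n a = 1 + Matrix.of (fun i j => if j = Fin.last n then ext F n a i else 0) := by
  funext i j
  simp only [hmat, Matrix.add_apply, Matrix.one_apply, Matrix.of_apply]
  rcases eq_or_ne i j with rfl | hij
  · rcases eq_or_ne i (Fin.last n) with rfl | hi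
    · simp [ext_last]
    · rw [if_pos rfl, if_pos rfl, if_neg hi, add_zero]
  · simp only [if_neg hij]
    rcases eq_or_ne j (Fin.last n) with rfl | hj
    · obtain ⟨i0, rfl⟩ := Fin.exists_castSucc_eq.mpr hij
      have hi : ((Fin.castSucc i0 : Fin (n+1)) : ℕ) < n := i0.isLt
      rw [dif_pos ⟨hi, by simp⟩, if_pos rfl, zero_add]
      have : (⟨((Fin.castSucc i0 : Fin (n+1)) : ℕ), hi⟩ : Fin n) = i0 := Fin.ext rfl
      rw [this, ext_castSucc]
    · have hcond : ¬((i : ℕ) < n ∧ (j : ℕ) = n) := by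
        rintro ⟨-, h2⟩
        exact hj (Fin.ext (by simp [h2]))
      rw [if_neg hj, dif_neg hcond, add_zero]

lemma hmat_mulVec (a : Fin n → F) (v : Fin (n + 1) → F) :
    (hmat F n a).mulVec v = v + v (Fin.last n) • ext F n a := by
  rw [hmat_eq, Matrix.add_mulVec, Matrix.one_mulVec]
  congr 1
  funext i
  simp only [Matrix.mulVec, dotProduct, Matrix.of_apply, Pi.smul_apply, smul_eq_mul,
    ite_mul, zero_mul]
  rw [Finset.sum_ite_eq' Finset.univ (Fin.last n) (fun x => ext F n a i * v x)]
  simp [mul_comm]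

lemma hmat_fix {v : Fin (n + 1) → F} (hv : v (Fin.last n) = 0) (a : Fin n → F) :
    (hmat F n a).mulVec v = v := by
  rw [hmat_mulVec, hv, zero_smul, add_zero]

abbrev G (a : Fin n → F) := Matrix.mulVecLin (hmat F n a)

lemma map_inf_W (a : Fin n → F) (X : Submodule F (Fin (n + 1) → F)) :
    Submodule.map (G a) X ⊓ coordSpace F (n + 1) n = X ⊓ coordSpace F (n + 1) n := by
  ext v
  simp only [Submodule.mem_inf, Submodule.mem_map, Matrix.mulVecLin_apply]
  constructor
  · rintro ⟨⟨u, hu, rfl⟩, hw⟩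
    rw [mem_W, hmat_mulVec] at hw
    simp [ext_last] at hw
    rw [hmat_fix hw]
    exact ⟨hu, mem_W.mpr hw⟩
  · rintro ⟨hv, hw⟩
    exact ⟨⟨v, hv, hmat_fix (mem_W.mp hw) a⟩, hw⟩

lemma G_comp (a b : Fin n → F) (v : Fin (n + 1) → F) :
    G b (G a v) = G (a + b) v := by
  simp only [Matrix.mulVecLin_apply, hmat_mulVec, map_add, Pi.add_apply, Pi.smul_apply,
    ext_last, smul_eq_mul, mul_zero, add_zero, smul_zero, zero_smul]
  module

lemma map_G_G (a b : Fin n → F) (X : Submodule F (Fin (n + 1) → F)) :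
    Submodule.map (G b) (Submodule.map (G a) X) = Submodule.map (G (a + b)) X := by
  rw [← Submodule.map_comp]
  congr 1
  exact LinearMap.ext fun v => G_comp a b v

lemma hOrbit_eq_of_map {a : Fin n → F} {X X' : Submodule F (Fin (n + 1) → F)}
    (h : Submodule.map (G a) X = X') : hOrbit F n X' = hOrbit F n X := by
  ext Y
  constructor
  · rintro ⟨b, rfl⟩
    exact ⟨a + b, by rw [← map_G_G, h]⟩
  · rintro ⟨c, rfl⟩
    refine ⟨c - a, ?_⟩
    rw [← h, map_G_G]
    have : a + (c - a) = c := by abel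
    rw [this]

lemma self_mem_hOrbit (X : Submodule F (Fin (n + 1) → F)) : X ∈ hOrbit F n X := by
  refine ⟨0, ?_⟩
  have : ∀ v, G (0 : Fin n → F) v = v := by
    intro v
    simp [Matrix.mulVecLin_apply, hmat_mulVec, show ext F n 0 = 0 from map_zero _]
  ext v
  simp only [Submodule.mem_map]
  constructor
  · rintro ⟨u, hu, rfl⟩; rwa [this]
  · intro hv; exact ⟨v, hv, this v⟩

lemma inf_W_eq_of_orbit_eq {X X' : Submodule F (Fin (n + 1) → F)}
    (h : hOrbit F n X = hOrbit F n X') :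
    X ⊓ coordSpace F (n + 1) n = X' ⊓ coordSpace F (n + 1) n := by
  have : X' ∈ hOrbit F n X := h ▸ self_mem_hOrbit X'
  obtain ⟨a, ha⟩ := this
  rw [← ha, map_inf_W]

lemma ext_injective : Function.Injective (ext F n) := by
  intro a b h
  have := congrArg (pr F n) h
  rwa [pr_ext, pr_ext] at this

lemma W_eq_range : coordSpace F (n + 1) n = LinearMap.range (ext F n) := by
  ext v
  rw [LinearMap.mem_range]
  constructor
  · intro hv; exact ⟨pr F n v, ext_pr_of_mem hv⟩
  · rintro ⟨a, rfl⟩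
    rw [mem_W, ext_last]

lemma finrank_W : Module.finrank F (coordSpace F (n + 1) n) = n := by
  rw [W_eq_range, LinearMap.finrank_range_of_inj ext_injective, Module.finrank_fin_fun]

lemma finrank_map_ext (Z : Submodule F (Fin n → F)) :
    Module.finrank F (Submodule.map (ext F n) Z) = Module.finrank F Z :=
  (LinearEquiv.finrank_eq (Submodule.equivMapOfInjective _ ext_injective Z)).symm

lemma map_ext_le_W (Z : Submodule F (Fin n → F)) :
    Submodule.map (ext F n) Z ≤ coordSpace F (n + 1) n := by
  rintro v ⟨z, hz, rfl⟩
  rw [mem_W, ext_last]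

lemma map_pr_map_ext (Z : Submodule F (Fin n → F)) :
    Submodule.map (pr F n) (Submodule.map (ext F n) Z) = Z := by
  rw [← Submodule.map_comp]
  have : (pr F n).comp (ext F n) = LinearMap.id := LinearMap.ext fun a => pr_ext a
  rw [this, Submodule.map_id]

lemma map_ext_map_pr {Y : Submodule F (Fin (n + 1) → F)}
    (hY : Y ≤ coordSpace F (n + 1) n) :
    Submodule.map (ext F n) (Submodule.map (pr F n) Y) = Y := by
  rw [← Submodule.map_comp]
  ext v
  simp only [Submodule.mem_map, LinearMap.comp_apply]
  constructor
  · rintro ⟨u, hu, rfl⟩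
    rwa [ext_pr_of_mem (hY hu)]
  · intro hv
    exact ⟨v, hv, ext_pr_of_mem (hY hv)⟩

lemma finrank_map_pr {Y : Submodule F (Fin (n + 1) → F)}
    (hY : Y ≤ coordSpace F (n + 1) n) :
    Module.finrank F (Submodule.map (pr F n) Y) = Module.finrank F Y := by
  conv_rhs => rw [← map_ext_map_pr hY]
  rw [finrank_map_ext]

/-- the vector `e_{n+1}` -/
def evec : Fin (n + 1) → F := Fin.snoc 0 1

lemma evec_last : (evec : Fin (n + 1) → F) (Fin.last n) = 1 := by simp [evec]

lemma evec_notMem_W : (evec : Fin (n + 1) → F) ∉ coordSpace F (n + 1) n := by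
  rw [mem_W, evec_last]
  exact one_ne_zero

end CardOrbitsAux
namespace CardOrbitsAux
variable {F : Type} [Field F] {n : ℕ}

lemma finrank_inf {X : Submodule F (Fin (n + 1) → F)}
    (hX : ¬ X ≤ coordSpace F (n + 1) n) {k : ℕ} (hr : Module.finrank F X = k) :
    Module.finrank F (X ⊓ coordSpace F (n + 1) n : Submodule F (Fin (n + 1) → F)) = k - 1 := by
  have hlt : coordSpace F (n + 1) n < X ⊔ coordSpace F (n + 1) n :=
    lt_of_le_of_ne le_sup_right (fun h => hX (le_trans le_sup_left h.ge))
  have h1 : n < Module.finrank F (X ⊔ coordSpace F (n + 1) n : Submodule F (Fin (n + 1) → F)) := by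
    have := Submodule.finrank_lt_finrank_of_lt hlt
    rwa [finrank_W] at this
  have h2 : Module.finrank F (X ⊔ coordSpace F (n + 1) n : Submodule F (Fin (n + 1) → F)) ≤ n + 1 := by
    have := Submodule.finrank_le (X ⊔ coordSpace F (n + 1) n)
    rwa [Module.finrank_fin_fun] at this
  have hsum := Submodule.finrank_sup_add_finrank_inf_eq X (coordSpace F (n + 1) n)
  rw [hr, finrank_W] at hsum
  omega

variable (F n) in
/-- `map ext Z ⊔ span {evec}` : canonical orbit representative with `X ∩ W` corresponding
to `Z`. -/
noncomputable def xzero (Z : Submodule F (Fin n → F)) : Submodule F (Fin (n + 1) → F) :=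
  Submodule.map (ext F n) Z ⊔ Submodule.span F {evec}

lemma evec_ne_zero : (evec : Fin (n + 1) → F) ≠ 0 := by
  intro h
  have : (evec : Fin (n + 1) → F) (Fin.last n) = 0 := by rw [h]; rfl
  rw [evec_last] at this
  exact one_ne_zero this

lemma evec_mem_xzero (Z : Submodule F (Fin n → F)) : evec ∈ xzero F n Z :=
  Submodule.mem_sup_right (Submodule.subset_span rfl)

lemma xzero_not_le_W (Z : Submodule F (Fin n → F)) :
    ¬ xzero F n Z ≤ coordSpace F (n + 1) n :=
  fun h => evec_notMem_W (h (evec_mem_xzero Z))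

lemma xzero_inf_W (Z : Submodule F (Fin n → F)) :
    xzero F n Z ⊓ coordSpace F (n + 1) n = Submodule.map (ext F n) Z := by
  apply le_antisymm
  · rintro v ⟨hv, hw⟩
    obtain ⟨u, hu, w, hw', rfl⟩ := Submodule.mem_sup.mp hv
    obtain ⟨c, rfl⟩ := Submodule.mem_span_singleton.mp hw'
    have hul : u (Fin.last n) = 0 := mem_W.mp (map_ext_le_W Z hu)
    have hc : c = 0 := by
      have := mem_W.mp hw
      simp only [Pi.add_apply, Pi.smul_apply, hul, evec_last, smul_eq_mul, mul_one,
        zero_add] at this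
      exact this
    rw [hc, zero_smul, add_zero]
    exact hu
  · exact le_inf le_sup_left (map_ext_le_W Z)

lemma finrank_xzero {Z : Submodule F (Fin n → F)} {k : ℕ} (hk : 1 ≤ k)
    (hZ : Module.finrank F Z = k - 1) : Module.finrank F (xzero F n Z) = k := by
  have hbot : Submodule.map (ext F n) Z ⊓ Submodule.span F {(evec : Fin (n + 1) → F)} = ⊥ := by
    rw [eq_bot_iff]
    rintro v ⟨hv, hs⟩
    obtain ⟨c, rfl⟩ := Submodule.mem_span_singleton.mp hs
    have : c * 1 = 0 := by
      have h0 := mem_W.mp (map_ext_le_W Z hv)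
      simpa [evec_last] using h0
    rw [mul_one] at this
    rw [this, zero_smul]
    exact Submodule.zero_mem ⊥
  have hsum := Submodule.finrank_sup_add_finrank_inf_eq
    (Submodule.map (ext F n) Z) (Submodule.span F {(evec : Fin (n + 1) → F)})
  rw [hbot, finrank_bot, finrank_map_ext, hZ, finrank_span_singleton evec_ne_zero] at hsum
  rw [xzero]
  omega

lemma map_G_of_le_W {a : Fin n → F} {p : Submodule F (Fin (n + 1) → F)}
    (hp : p ≤ coordSpace F (n + 1) n) : Submodule.map (G a) p = p := by
  ext v
  simp only [Submodule.mem_map, Matrix.mulVecLin_apply]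
  constructor
  · rintro ⟨u, hu, rfl⟩
    rwa [hmat_fix (mem_W.mp (hp hu))]
  · intro hv
    exact ⟨v, hv, hmat_fix (mem_W.mp (hp hv)) a⟩

lemma hOrbit_adjust {X : Submodule F (Fin (n + 1) → F)}
    (hX : ¬ X ≤ coordSpace F (n + 1) n) :
    hOrbit F n ((X ⊓ coordSpace F (n + 1) n) ⊔ Submodule.span F {(evec : Fin (n + 1) → F)}) =
      hOrbit F n X := by
  obtain ⟨x, hxX, hxW⟩ := SetLike.not_le_iff_exists.mp hX
  have hxl : x (Fin.last n) ≠ 0 := fun h => hxW (mem_W.mpr h)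
  set x' : Fin (n + 1) → F := (x (Fin.last n))⁻¹ • x with hx'def
  have hx'X : x' ∈ X := X.smul_mem _ hxX
  have hx'l : x' (Fin.last n) = 1 := by
    simp [hx'def, inv_mul_cancel₀ hxl]
  set a : Fin n → F := pr F n (evec - x') with hadef
  have hea : ext F n a = evec - x' := by
    apply ext_pr_of_mem
    rw [mem_W]
    simp [evec_last, hx'l]
  have hGx' : G a x' = evec := by
    rw [Matrix.mulVecLin_apply, hmat_mulVec, hx'l, one_smul, hea]
    abel
  have hdecomp : X = (X ⊓ coordSpace F (n + 1) n) ⊔ Submodule.span F {x'} := by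
    apply le_antisymm
    · intro v hv
      have h1 : v - v (Fin.last n) • x' ∈ X ⊓ coordSpace F (n + 1) n := by
        refine ⟨X.sub_mem hv (X.smul_mem _ hx'X), mem_W.mpr ?_⟩
        simp [hx'l]
      have h2 : v = (v - v (Fin.last n) • x') + v (Fin.last n) • x' := by abel
      rw [h2]
      exact Submodule.add_mem _ (Submodule.mem_sup_left h1)
        (Submodule.mem_sup_right
          (Submodule.smul_mem _ _ (Submodule.subset_span rfl)))
    · exact sup_le inf_le_left (Submodule.span_le.mpr (Set.singleton_subset_iff.mpr hx'X))
  apply hOrbit_eq_of_map (a := a)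
  conv_lhs => rw [hdecomp]
  rw [Submodule.map_sup, map_G_of_le_W inf_le_right, Submodule.map_span,
    Set.image_singleton]
  rw [show (G a) x' = evec from hGx']

end CardOrbitsAux

section Main

open CardOrbitsAux

variable (F : Type) [Field F] (n k : ℕ)

abbrev OrbSet := {s : Set (Submodule F (Fin (n + 1) → F)) //
    ∃ X : Submodule F (Fin (n + 1) → F),
      (¬ X ≤ coordSpace F (n + 1) n ∧ Module.finrank F X = k) ∧ s = hOrbit F n X}

abbrev SubSet := {Z : Submodule F (Fin n → F) // Module.finrank F Z = k - 1}

noncomputable def fwd : OrbSet F n k → SubSet F n k := fun s =>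
  ⟨Submodule.map (pr F n) (s.2.choose ⊓ coordSpace F (n + 1) n), by
    obtain ⟨⟨hne, hrk⟩, hs⟩ := s.2.choose_spec
    rw [finrank_map_pr inf_le_right, finrank_inf hne hrk]⟩

noncomputable def bwd (hk : 1 ≤ k) : SubSet F n k → OrbSet F n k := fun Z =>
  ⟨hOrbit F n (xzero F n Z.1), xzero F n Z.1,
    ⟨xzero_not_le_W Z.1, finrank_xzero hk Z.2⟩, rfl⟩

lemma bwd_fwd (hk : 1 ≤ k) : Function.LeftInverse (bwd F n k hk) (fwd F n k) := by
  intro s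
  obtain ⟨⟨hne, hrk⟩, hs⟩ := s.2.choose_spec
  apply Subtype.ext
  show hOrbit F n (xzero F n (Submodule.map (pr F n)
      (s.2.choose ⊓ coordSpace F (n + 1) n))) = s.1
  rw [show xzero F n (Submodule.map (pr F n) (s.2.choose ⊓ coordSpace F (n + 1) n)) =
      (s.2.choose ⊓ coordSpace F (n + 1) n) ⊔ Submodule.span F {(evec : Fin (n + 1) → F)} by
    rw [xzero, map_ext_map_pr inf_le_right]]
  exact (hOrbit_adjust hne).trans hs.symm

lemma fwd_bwd (hk : 1 ≤ k) : Function.RightInverse (bwd F n k hk) (fwd F n k) := by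
  intro Z
  apply Subtype.ext
  set s : OrbSet F n k := bwd F n k hk Z with hsdef
  obtain ⟨⟨hne, hrk⟩, hs⟩ := s.2.choose_spec
  show Submodule.map (pr F n) (s.2.choose ⊓ coordSpace F (n + 1) n) = Z.1
  have horb : hOrbit F n (xzero F n Z.1) = hOrbit F n s.2.choose := hs
  have := inf_W_eq_of_orbit_eq horb.symm
  rw [this, xzero_inf_W, map_pr_map_ext]

end Main

/-- For `1 ≤ k ≤ n+1`, the number of orbits of the action of `H(n+1, F_q)` on
`A_q(n+1, k)` equals the Gaussian binomial coefficient `[n choose k−1]_q`. -/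
theorem card_orbits (F : Type) [Field F] [Fintype F] (n k : ℕ)
    (hk : 1 ≤ k) (hk' : k ≤ n + 1) :
    Nat.card {s : Set (Submodule F (Fin (n + 1) → F)) //
        ∃ X : Submodule F (Fin (n + 1) → F),
          (¬ X ≤ coordSpace F (n + 1) n ∧ Module.finrank F X = k) ∧
            s = hOrbit F n X} =
      gaussBinom F n (k - 1) := by
  rw [gaussBinom]
  exact Nat.card_congr ⟨fwd F n k, bwd F n k hk, bwd_fwd F n k hk, fwd_bwd F n k hk⟩
end

section
/- For each k with 0 ≤ k ≤ n, the indicator vector s_k ∈ ℂ^{B_q(n)} of the set B_q(n,k) (having component 1 at every k-dimensional subspace and 0 elsewhere) lies in the linear span of the vectors {w_α : α ∈ {0,1}^n}, where w_α ∈ ℂ^{B_q(n)} is the vector with component w_α(X) = (−1)^{|S(α) ∩ P(X)|} q^{d(α,X)}. -/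
noncomputable instance (F : Type) [Field F] [Fintype F] (m : ℕ) :
    Fintype (Submodule F (Fin m → F)) := Fintype.ofFinite _

/-- The pivotal set `P(X)` of a subspace `X ⊆ F^n`: here `j : Fin n` stands for the
index `j+1 ∈ {1, …, n}`, and `j ∈ P(X)` iff `X ∩ F^(j+1) ⊄ F^j`. -/
noncomputable def pivots (F : Type) [Field F] [Fintype F] (n : ℕ)
    (X : Submodule F (Fin n → F)) : Finset (Fin n) :=
  open Classical in
  Finset.univ.filter fun j : Fin n =>
    ¬ (X ⊓ coordSpace F n ((j : ℕ) + 1) ≤ coordSpace F n (j : ℕ))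

/-- `d(α, i) = |{j < i : α_j ≠ α_i}|`. -/
def dAlphaI (n : ℕ) (α : Fin n → Bool) (i : Fin n) : ℕ :=
  (Finset.univ.filter fun j : Fin n => (j : ℕ) < (i : ℕ) ∧ α j ≠ α i).card

/-- `d(α, X) = ∑_{i ∉ P(X)} d(α, i)`. -/
noncomputable def dAlphaX (F : Type) [Field F] [Fintype F] (n : ℕ)
    (α : Fin n → Bool) (X : Submodule F (Fin n → F)) : ℕ :=
  ∑ i ∈ (Finset.univ \ pivots F n X), dAlphaI n α i

/-- The vector `w_α` with component `(−1)^(|S(α) ∩ P(X)|) q^(d(α,X))` at `X`. -/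
noncomputable def wAlpha (F : Type) [Field F] [Fintype F] (n : ℕ)
    (α : Fin n → Bool) : Submodule F (Fin n → F) → ℂ :=
  fun X =>
    (-1 : ℂ) ^ ((pivots F n X).filter fun i => α i = true).card *
      (Fintype.card F : ℂ) ^ (dAlphaX F n α X)

/-! ## Auxiliary development -/

open Finset

section CoordSpace

variable (F : Type) [Field F] [Fintype F] (n : ℕ)

lemma coordSpace_mono {m m' : ℕ} (h : m ≤ m') : coordSpace F n m ≤ coordSpace F n m' := by
  intro v hv i hi
  exact hv i (le_trans h hi)

lemma coordSpace_self : coordSpace F n n = ⊤ := by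
  rw [eq_top_iff]
  intro v _ i hi
  exact absurd hi (by omega)

lemma coordSpace_zero' : coordSpace F n 0 = ⊥ := by
  ext v
  simp only [Submodule.mem_bot]
  constructor
  · intro hv; funext i; exact hv i (Nat.zero_le _)
  · rintro rfl; intro i _; rfl

set_option maxHeartbeats 1000000 in
set_option synthInstance.maxHeartbeats 1000000 in
lemma finrank_inf_succ (X : Submodule F (Fin n → F)) (j : Fin n) :
    Module.finrank F ↥(X ⊓ coordSpace F n ((j : ℕ) + 1)) =
      Module.finrank F ↥(X ⊓ coordSpace F n (j : ℕ)) +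
        (if j ∈ pivots F n X then 1 else 0) := by
  classical
  set Y := X ⊓ coordSpace F n ((j : ℕ) + 1) with hY
  set Z := X ⊓ coordSpace F n (j : ℕ) with hZ
  have hZY : Z ≤ Y := inf_le_inf_left _ (coordSpace_mono F n (Nat.le_succ _))
  set φ : ↥Y →ₗ[F] F := (LinearMap.proj j).comp Y.subtype with hφ
  have hker : LinearMap.ker φ = Submodule.comap Y.subtype Z := by
    ext v
    simp only [LinearMap.mem_ker, Submodule.mem_comap, hφ, LinearMap.comp_apply,
      Submodule.coe_subtype, LinearMap.proj_apply]
    constructor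
    · intro hv
      have hvY : (v : Fin n → F) ∈ X ⊓ coordSpace F n ((j : ℕ) + 1) := v.2
      rw [Submodule.mem_inf] at hvY
      rw [hZ, Submodule.mem_inf]
      refine ⟨hvY.1, fun i hi => ?_⟩
      rcases eq_or_lt_of_le hi with h | h
      · have : i = j := Fin.ext h.symm
        rw [this]; exact hv
      · exact hvY.2 i h
    · intro hv
      rw [hZ, Submodule.mem_inf] at hv
      exact hv.2 j le_rfl
  have hrn := LinearMap.finrank_range_add_finrank_ker φ
  have hkerrank : Module.finrank F ↥(LinearMap.ker φ) = Module.finrank F ↥Z := by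
    rw [hker]
    exact (Submodule.comapSubtypeEquivOfLe hZY).finrank_eq
  have hpiv : j ∈ pivots F n X ↔ ¬ (Y ≤ coordSpace F n (j : ℕ)) := by
    simp [pivots, hY]
  have hrange : Module.finrank F ↥(LinearMap.range φ) =
      (if j ∈ pivots F n X then 1 else 0) := by
    by_cases hp : j ∈ pivots F n X
    · rw [if_pos hp]
      have hne : LinearMap.range φ ≠ ⊥ := by
        rw [hpiv] at hp
        rw [SetLike.not_le_iff_exists] at hp
        obtain ⟨v, hvY, hvC⟩ := hp
        have : ∃ i : Fin n, (j : ℕ) ≤ (i : ℕ) ∧ v i ≠ 0 := by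
          by_contra h
          push_neg at h
          exact hvC (fun i hi => h i hi)
        obtain ⟨i, hij, hvi⟩ := this
        have hi : i = j := by
          rcases eq_or_lt_of_le hij with h | h
          · exact Fin.ext h.symm
          · exfalso
            have := (Submodule.mem_inf.mp hvY).2 i h
            exact hvi this
        subst hi
        intro hbot
        have : φ ⟨v, hvY⟩ = 0 := by
          have := LinearMap.mem_range_self φ ⟨v, hvY⟩
          rw [hbot, Submodule.mem_bot] at this
          exact this
        exact hvi this
      have hle : Module.finrank F ↥(LinearMap.range φ) ≤ 1 := by
        simpa using Submodule.finrank_le (LinearMap.range φ)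
      have hne0 : Module.finrank F ↥(LinearMap.range φ) ≠ 0 := fun h0 =>
        hne (Submodule.finrank_eq_zero.mp h0)
      omega
    · rw [if_neg hp]
      have : LinearMap.range φ = ⊥ := by
        rw [LinearMap.range_eq_bot]
        ext v
        simp only [hφ, LinearMap.comp_apply, Submodule.coe_subtype, LinearMap.proj_apply,
          LinearMap.zero_apply]
        rw [hpiv, not_not] at hp
        exact hp v.2 j le_rfl
      rw [this, finrank_bot]
  omega

lemma finrank_eq_card_pivots (X : Submodule F (Fin n → F)) :
    Module.finrank F ↥X = (pivots F n X).card := by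
  classical
  have main : ∀ m, m ≤ n → Module.finrank F ↥(X ⊓ coordSpace F n m) =
      ((pivots F n X).filter fun j : Fin n => (j : ℕ) < m).card := by
    intro m
    induction m with
    | zero =>
      intro _
      rw [coordSpace_zero', inf_bot_eq]
      simp
    | succ m ih =>
      intro hm
      have hmn : m < n := hm
      have hstep := finrank_inf_succ F n X ⟨m, hmn⟩
      simp only [Fin.val_mk] at hstep -- reduce coercions
      rw [hstep, ih (le_of_lt hmn)]
      have hcard : ((pivots F n X).filter fun j : Fin n => (j : ℕ) < m + 1).card =
          ((pivots F n X).filter fun j : Fin n => (j : ℕ) < m).card +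
            (if (⟨m, hmn⟩ : Fin n) ∈ pivots F n X then 1 else 0) := by
        rw [Finset.card_filter, Finset.card_filter]
        have : ∀ j ∈ pivots F n X,
            (if (j : ℕ) < m + 1 then (1 : ℕ) else 0) =
              (if (j : ℕ) < m then (1 : ℕ) else 0) +
                (if j = (⟨m, hmn⟩ : Fin n) then 1 else 0) := by
          intro j _
          by_cases h1 : (j : ℕ) < m
          · have : j ≠ (⟨m, hmn⟩ : Fin n) := by
              intro h; rw [h] at h1; simp at h1
            simp [h1, this, Nat.lt_succ_of_lt h1]
          · by_cases h2 : (j : ℕ) = m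
            · have : j = (⟨m, hmn⟩ : Fin n) := Fin.ext h2
              simp [h1, this, h2]
            · have : j ≠ (⟨m, hmn⟩ : Fin n) := by
                intro h; rw [h] at h2; simp at h2
              have h3 : ¬ ((j : ℕ) < m + 1) := by omega
              simp [h1, h3, this]
        rw [Finset.sum_congr rfl this, Finset.sum_add_distrib,
          Finset.sum_ite_eq' (pivots F n X) (⟨m, hmn⟩ : Fin n) (fun _ => (1 : ℕ))]
      omega
  have h1 := main n le_rfl
  rw [coordSpace_self, inf_top_eq] at h1
  rw [h1]
  congr 1
  apply Finset.filter_true_of_mem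
  intro j _
  exact j.2

end CoordSpace

/-! ## The spanning family on Boolean cubes -/

noncomputable def Gfun (q n : ℕ) (α β : Fin n → Bool) : ℂ :=
  ∏ i, if β i = true then (if α i = true then -1 else 1) else (q : ℂ) ^ (dAlphaI n α i)

lemma dAlphaI_snoc (n : ℕ) (α : Fin n → Bool) (a : Bool) (i : Fin n) :
    dAlphaI (n + 1) (Fin.snoc α a) (Fin.castSucc i) = dAlphaI n α i := by
  unfold dAlphaI
  rw [Finset.card_filter, Finset.card_filter, Fin.sum_univ_castSucc]
  have hlt : ¬ (((Fin.last n : Fin (n+1)) : ℕ) < ((Fin.castSucc i : Fin (n+1)) : ℕ)) := by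
    simp only [Fin.val_last, Fin.coe_castSucc]
    omega
  rw [if_neg (fun h => hlt h.1), add_zero]
  apply Finset.sum_congr rfl
  intro j _
  simp [Fin.snoc_castSucc]

def phiMap (n : ℕ) (b : Bool) : ((Fin n → Bool) → ℂ) →ₗ[ℂ] ((Fin (n + 1) → Bool) → ℂ) where
  toFun g := fun β => if β (Fin.last n) = b then g (Fin.init β) else 0
  map_add' := by
    intro g h; funext β
    by_cases hb : β (Fin.last n) = b <;> simp [hb]
  map_smul' := by
    intro c g; funext β
    by_cases hb : β (Fin.last n) = b <;> simp [hb]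

lemma Gfun_snoc (q n : ℕ) (α : Fin n → Bool) (a : Bool) (β : Fin (n + 1) → Bool) :
    Gfun q (n + 1) (Fin.snoc α a) β =
      Gfun q n α (Fin.init β) *
        (if β (Fin.last n) = true then (if a = true then -1 else 1)
          else (q : ℂ) ^ (dAlphaI (n + 1) (Fin.snoc α a) (Fin.last n))) := by
  unfold Gfun
  rw [Fin.prod_univ_castSucc]
  congr 1
  · apply Finset.prod_congr rfl
    intro i _
    rw [dAlphaI_snoc]
    simp [Fin.snoc_castSucc, Fin.init]
    rfl
  · simp [Fin.snoc_last]

lemma Gfun_snoc_eq (q n : ℕ) (α : Fin n → Bool) (a : Bool) :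
    Gfun q (n + 1) (Fin.snoc α a) =
      ((q : ℂ) ^ (dAlphaI (n + 1) (Fin.snoc α a) (Fin.last n))) • phiMap n false (Gfun q n α)
        + (if a = true then (-1 : ℂ) else 1) • phiMap n true (Gfun q n α) := by
  funext β
  rw [Gfun_snoc]
  simp only [Pi.add_apply, Pi.smul_apply, phiMap, LinearMap.coe_mk, AddHom.coe_mk,
    smul_eq_mul]
  cases hb : β (Fin.last n) <;> simp [hb] <;> ring

lemma phi_mem (q n : ℕ) (hq : q ≠ 0) (α : Fin n → Bool) (b : Bool) :
    phiMap n b (Gfun q n α) ∈ Submodule.span ℂ (Set.range (Gfun q (n + 1))) := by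
  set S := Submodule.span ℂ (Set.range (Gfun q (n + 1))) with hS
  set z0 : ℕ := dAlphaI (n + 1) (Fin.snoc α false) (Fin.last n) with hz0
  set z1 : ℕ := dAlphaI (n + 1) (Fin.snoc α true) (Fin.last n) with hz1
  have hA0 : Gfun q (n + 1) (Fin.snoc α false) ∈ S :=
    Submodule.subset_span ⟨Fin.snoc α false, rfl⟩
  have hA1 : Gfun q (n + 1) (Fin.snoc α true) ∈ S :=
    Submodule.subset_span ⟨Fin.snoc α true, rfl⟩
  have e0 := Gfun_snoc_eq q n α false
  have e1 := Gfun_snoc_eq q n α true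
  simp only [if_pos, if_neg, Bool.false_eq_true, reduceIte] at e0 e1
  -- e0 : G(snoc false) = q^z0 • Φf g + 1 • Φt g
  -- e1 : G(snoc true)  = q^z1 • Φf g + (-1) • Φt g
  have hc : ((q : ℂ) ^ z0 + (q : ℂ) ^ z1) ≠ 0 := by
    have : ((q ^ z0 + q ^ z1 : ℕ) : ℂ) ≠ 0 := by
      rw [Nat.cast_ne_zero]
      positivity
    push_cast at this
    exact this
  have hsum : Gfun q (n + 1) (Fin.snoc α false) + Gfun q (n + 1) (Fin.snoc α true) =
      ((q : ℂ) ^ z0 + (q : ℂ) ^ z1) • phiMap n false (Gfun q n α) := by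
    rw [e0, e1]
    module
  have hf : phiMap n false (Gfun q n α) ∈ S := by
    have : phiMap n false (Gfun q n α) = ((q : ℂ) ^ z0 + (q : ℂ) ^ z1)⁻¹ •
        (Gfun q (n + 1) (Fin.snoc α false) + Gfun q (n + 1) (Fin.snoc α true)) := by
      rw [hsum, smul_smul, inv_mul_cancel₀ hc, one_smul]
    rw [this]
    exact Submodule.smul_mem _ _ (Submodule.add_mem _ hA0 hA1)
  have ht : phiMap n true (Gfun q n α) ∈ S := by
    have : phiMap n true (Gfun q n α) =
        Gfun q (n + 1) (Fin.snoc α false) - ((q : ℂ) ^ z0) • phiMap n false (Gfun q n α) := by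
      rw [e0]; module
    rw [this]
    exact Submodule.sub_mem _ hA0 (Submodule.smul_mem _ _ hf)
  cases b
  · exact hf
  · exact ht

lemma span_Gfun (q : ℕ) (hq : q ≠ 0) (n : ℕ) :
    Submodule.span ℂ (Set.range (Gfun q n)) = ⊤ := by
  induction n with
  | zero =>
    rw [eq_top_iff]
    intro f _
    have hf : f = f (fun _ => false) • Gfun q 0 (fun _ => false) := by
      funext β
      have hβ : β = (fun _ => false) := by funext i; exact i.elim0
      subst hβ
      simp [Gfun]
    rw [hf]
    exact Submodule.smul_mem _ _ (Submodule.subset_span ⟨_, rfl⟩)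
  | succ n ih =>
    rw [eq_top_iff]
    intro f _
    have key : ∀ (b : Bool) (g : (Fin n → Bool) → ℂ),
        phiMap n b g ∈ Submodule.span ℂ (Set.range (Gfun q (n + 1))) := by
      intro b g
      have hg : g ∈ Submodule.span ℂ (Set.range (Gfun q n)) := by rw [ih]; trivial
      have hmem : phiMap n b g ∈
          Submodule.map (phiMap n b) (Submodule.span ℂ (Set.range (Gfun q n))) :=
        Submodule.mem_map_of_mem hg
      rw [Submodule.map_span] at hmem
      refine Submodule.span_le.mpr ?_ hmem
      rintro x ⟨_, ⟨α, rfl⟩, rfl⟩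
      exact phi_mem q n hq α b
    have hf : f = phiMap n false (fun β' => f (Fin.snoc β' false))
        + phiMap n true (fun β' => f (Fin.snoc β' true)) := by
      funext β
      simp only [Pi.add_apply, phiMap, LinearMap.coe_mk, AddHom.coe_mk]
      cases hb : β (Fin.last n)
      · simp only [hb, Bool.false_eq_true, if_neg, if_pos, reduceIte, add_zero]
        have : Fin.snoc (Fin.init β) false = β := by
          rw [← hb]; exact Fin.snoc_init_self β
        rw [this]
      · simp only [hb, Bool.true_eq_false, reduceIte, zero_add]
        have : Fin.snoc (Fin.init β) true = β := by
          rw [← hb]; exact Fin.snoc_init_self β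
        rw [this]
    rw [hf]
    exact Submodule.add_mem _ (key false _) (key true _)

/-! ## Putting it together -/

open Classical in
/-- For `0 ≤ k ≤ n`, the indicator vector of the `k`-dimensional subspaces lies in
the span of the vectors `w_α`, `α ∈ {0,1}^n`. -/
theorem radial_mem_span (F : Type) [Field F] [Fintype F] (n k : ℕ) (hk : k ≤ n) :
    (fun X : Submodule F (Fin n → F) =>
        if Module.finrank F X = k then (1 : ℂ) else 0) ∈
      Submodule.span ℂ (Set.range (wAlpha F n)) := by
  classical
  set q := Fintype.card F with hqdef
  have hq : q ≠ 0 := Fintype.card_ne_zero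
  set p : Submodule F (Fin n → F) → (Fin n → Bool) :=
    fun X i => decide (i ∈ pivots F n X) with hp
  set L : ((Fin n → Bool) → ℂ) →ₗ[ℂ] (Submodule F (Fin n → F) → ℂ) :=
    LinearMap.funLeft ℂ ℂ p with hL
  have hfilter : ∀ X : Submodule F (Fin n → F),
      (Finset.univ.filter fun i => p X i = true) = pivots F n X := by
    intro X
    ext i
    simp [hp]
  have hG : ∀ α, L (Gfun q n α) = wAlpha F n α := by
    intro α
    funext X
    show Gfun q n α (p X) = wAlpha F n α X
    unfold Gfun wAlpha
    rw [Finset.prod_ite (s := Finset.univ) (p := fun i => p X i = true)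
      (fun i => if α i = true then (-1 : ℂ) else 1)
      (fun i => (q : ℂ) ^ (dAlphaI n α i))]
    congr 1
    · rw [hfilter X]
      rw [Finset.prod_ite (s := pivots F n X) (p := fun i => α i = true)
        (fun _ => (-1 : ℂ)) (fun _ => (1 : ℂ))]
      rw [Finset.prod_const, Finset.prod_const, one_pow, mul_one]
    · have : (Finset.univ.filter fun i => ¬ (p X i = true)) =
          Finset.univ \ pivots F n X := by
        ext i
        simp [hp]
      rw [this, Finset.prod_pow_eq_pow_sum]
      rfl
  have hind : L (fun β : Fin n → Bool =>
      if (Finset.univ.filter fun i => β i = true).card = k then (1 : ℂ) else 0)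
      = (fun X : Submodule F (Fin n → F) =>
          if Module.finrank F X = k then (1 : ℂ) else 0) := by
    funext X
    show (if (Finset.univ.filter fun i => p X i = true).card = k then (1 : ℂ) else 0) = _
    rw [hfilter X, ← finrank_eq_card_pivots F n X]
  have hmem : (fun β : Fin n → Bool =>
      if (Finset.univ.filter fun i => β i = true).card = k then (1 : ℂ) else 0) ∈
      Submodule.span ℂ (Set.range (Gfun q n)) := by
    rw [span_Gfun q hq n]; trivial
  have himg := Submodule.mem_map_of_mem (f := L) hmem
  rw [Submodule.map_span] at himg
  rw [hind] at himg
  refine Submodule.span_le.mpr ?_ himg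
  rintro x ⟨_, ⟨α, rfl⟩, rfl⟩
  exact Submodule.subset_span ⟨α, (hG α).symm⟩
end
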